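/- Let $u$ be continuous on $\mathbb{R}^n$ and let $\|u\|_* = \sup_{\partial\gamma = \emptyset} \frac{1}{|\gamma|}|\int_\gamma u\,\tau\,ds| + \sup_{|\gamma| \ge 1} \frac{1}{|\gamma|}|\int_\gamma u\,\tau\,ds|$ and $\|u\|_{**} = \|u\|_* + \sup_{|\gamma| < 1} |\int_\gamma u\,\tau\,ds|$ (suprema over smooth curves $\gamma$ of finite length $|\gamma|$ with unit tangent $\tau$). Then $\|u\|_* \le \|u\|_{**} \le 4\|u\|_*$. -/

import Mathlib

open MeasureTheory Finset Filter

noncomputable section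

abbrev Rn (n : ℕ) := Fin n → ℝ

/-- A smooth curve of length `L`, parametrized by arclength (unit tangent). -/
def IsCurve (n : ℕ) (γ : ℝ → Rn n) (L : ℝ) : Prop :=
  0 < L ∧ ContDiff ℝ (⊤ : ℕ∞) γ ∧ ∀ t, ‖deriv γ t‖ = 1

/-- The vector line integral `∫_γ u τ ds`. -/
def lineInt (n : ℕ) (u : Rn n → ℝ) (γ : ℝ → Rn n) (L : ℝ) : Rn n :=
  ∫ t in (0 : ℝ)..L, u (γ t) • deriv γ t

/-- The `i`-th component line integral `∫_γ u τᵢ ds`. -/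
def compInt (n : ℕ) (u : Rn n → ℝ) (γ : ℝ → Rn n) (L : ℝ) (i : Fin n) : ℝ :=
  ∫ t in (0 : ℝ)..L, u (γ t) * deriv γ t i

/-- If `C₁` bounds `(1/|γ|)|∫_γ u τ|` over closed curves and `C₂` bounds it
over curves of length `≥ 1`, then for every curve of length `< 1` one has
`|∫_γ u τ| ≤ 3 (C₁ + C₂)`; consequently `‖u‖_* ≤ ‖u‖_{**} ≤ 4 ‖u‖_*`. -/
theorem starstar_le_four_star (n : ℕ) (hn : 1 ≤ n) (u : Rn n → ℝ) (hu : Continuous u)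
    (C₁ C₂ : ℝ) (hC₁ : 0 ≤ C₁) (hC₂ : 0 ≤ C₂)
    (hclosed : ∀ (γ : ℝ → Rn n) (L : ℝ), IsCurve n γ L → γ 0 = γ L →
      ‖lineInt n u γ L‖ ≤ C₁ * L)
    (hlong : ∀ (γ : ℝ → Rn n) (L : ℝ), IsCurve n γ L → 1 ≤ L →
      ‖lineInt n u γ L‖ ≤ C₂ * L) :
    ∀ (γ : ℝ → Rn n) (L : ℝ), IsCurve n γ L → L < 1 →
      ‖lineInt n u γ L‖ ≤ 3 * (C₁ + C₂) := by
  intro γ L hγ hL1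
  obtain ⟨hL0, hsm, hunit⟩ := hγ
  have hcd : Continuous (deriv γ) := hsm.continuous_deriv (by simp)
  have hcont : Continuous fun t => u (γ t) • deriv γ t :=
    (hu.comp hsm.continuous).smul hcd
  set δ : ℝ → Rn n := fun t => γ (t + L) with hδ
  have hδderiv : ∀ t, deriv δ t = deriv γ (t + L) := by
    intro t
    simpa using deriv_comp_add_const γ L t
  have hδcurve : IsCurve n δ 1 := by
    refine ⟨one_pos, hsm.comp (contDiff_id.add contDiff_const), fun t => ?_⟩
    rw [hδderiv]; exact hunit _
  have hsplit : lineInt n u γ L = lineInt n u γ (L + 1) - lineInt n u δ 1 := by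
    have hδint : lineInt n u δ 1 = ∫ t in L..(L + 1), u (γ t) • deriv γ t := by
      unfold lineInt
      have : (∫ t in (0:ℝ)..1, u (δ t) • deriv δ t)
          = ∫ t in (0:ℝ)..1, u (γ (t + L)) • deriv γ (t + L) := by
        apply intervalIntegral.integral_congr
        intro t _
        simp only [hδderiv]; rfl
      rw [this]
      have := intervalIntegral.integral_comp_add_right (a := (0:ℝ)) (b := 1)
        (fun t => u (γ t) • deriv γ t) L
      simpa [zero_add, add_comm] using this
    rw [hδint]
    unfold lineInt
    rw [eq_sub_iff_add_eq]
    exact intervalIntegral.integral_add_adjacent_intervals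
      (hcont.intervalIntegrable _ _) (hcont.intervalIntegrable _ _)
  have h1 : ‖lineInt n u γ (L + 1)‖ ≤ C₂ * (L + 1) :=
    hlong γ (L + 1) ⟨by linarith, hsm, hunit⟩ (by linarith)
  have h2 : ‖lineInt n u δ 1‖ ≤ C₂ * 1 := hlong δ 1 hδcurve le_rfl
  calc ‖lineInt n u γ L‖ = ‖lineInt n u γ (L + 1) - lineInt n u δ 1‖ := by rw [hsplit]
    _ ≤ ‖lineInt n u γ (L + 1)‖ + ‖lineInt n u δ 1‖ := norm_sub_le _ _
    _ ≤ C₂ * (L + 1) + C₂ * 1 := add_le_add h1 h2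
    _ ≤ 3 * (C₁ + C₂) := by nlinarith
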